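/- Let T > 0 and let F, G : [0,T] × ℝ³ → [0,∞) be measurable. Then ∫₀ᵀ ∫_{ℝ³} (F(s,·) ∗ G(s,·))(ξ) dξ ds ≤ ( ∫₀ᵀ ( ∫_{ℝ³} F(s,ξ) dξ )² ds )^{1/2} ( ∫₀ᵀ ( ∫_{ℝ³} G(s,ξ) dξ )² ds )^{1/2} ≤ ( ess sup_{s∈[0,T]} ∫ |ξ|⁻¹ F(s,ξ) dξ )^{1/2} ( ∫₀ᵀ ∫ |ξ| F(s,ξ) dξ ds )^{1/2} ( ess sup_{s∈[0,T]} ∫ |ξ|⁻¹ G(s,ξ) dξ )^{1/2} ( ∫₀ᵀ ∫ |ξ| G(s,ξ) dξ ds )^{1/2}, where ∗ denotes convolution in ξ on ℝ³. -/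

import Mathlib

/-!
By Tonelli and translation invariance the convolution integral factorises as
`∫ (F ∗ G) = (∫ F) (∫ G)`, so the first inequality is Cauchy–Schwarz in time. For the second,
Cauchy–Schwarz in `ξ` after writing `F = (|ξ|⁻¹ F)^{1/2} (|ξ| F)^{1/2}` gives
`(∫ F)² ≤ (∫ |ξ|⁻¹ F) (∫ |ξ| F)` for each time `s`; bounding the first factor by its essential
supremum and integrating in `s` gives `‖F‖²_{L²χ⁰} ≤ ‖F‖_{L^∞χ⁻¹} ‖F‖_{L¹χ¹}`.
-/

open MeasureTheory
open scoped ENNReal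

theorem lintegral_lintegral_mul_sub {G : Type*} [MeasurableSpace G] [AddGroup G]
    [MeasurableAdd₂ G] [MeasurableNeg G] {μ : Measure G} [SFinite μ] [μ.IsAddRightInvariant]
    {f g : G → ℝ≥0∞} (hf : Measurable f) (hg : Measurable g) :
    ∫⁻ x, ∫⁻ y, f y * g (x - y) ∂μ ∂μ = (∫⁻ x, f x ∂μ) * ∫⁻ x, g x ∂μ := by
  rw [lintegral_lintegral_swap (by fun_prop)]
  calc ∫⁻ y, ∫⁻ x, f y * g (x - y) ∂μ ∂μ = ∫⁻ y, f y * ∫⁻ x, g x ∂μ ∂μ := by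
        refine lintegral_congr fun y => ?_
        rw [lintegral_const_mul _ (by fun_prop), lintegral_sub_right_eq_self]
    _ = _ := lintegral_mul_const _ hf

section

variable {α : Type*} [MeasurableSpace α] {μ : Measure α}

theorem lintegral_mul_le_L2_mul_L2 {f g : α → ℝ≥0∞} (hf : AEMeasurable f μ)
    (hg : AEMeasurable g μ) :
    ∫⁻ x, f x * g x ∂μ ≤
      (∫⁻ x, f x ^ 2 ∂μ) ^ (1 / 2 : ℝ) * (∫⁻ x, g x ^ 2 ∂μ) ^ (1 / 2 : ℝ) := by
  simpa only [Pi.mul_apply, ENNReal.rpow_two] using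
    ENNReal.lintegral_mul_le_Lp_mul_Lq μ Real.HolderConjugate.two_two hf hg

theorem lintegral_sq_le_of_sq_le_mul {f g h : α → ℝ≥0∞} (hg : AEMeasurable g μ)
    (hh : AEMeasurable h μ) (hfgh : ∀ᵐ x ∂μ, f x ^ 2 ≤ g x * h x) :
    (∫⁻ x, f x ∂μ) ^ 2 ≤ (∫⁻ x, g x ∂μ) * ∫⁻ x, h x ∂μ := by
  have rpow_half_sq : ∀ a : ℝ≥0∞, (a ^ (1 / 2 : ℝ)) ^ 2 = a := fun a => by
    rw [← ENNReal.rpow_natCast, ← ENNReal.rpow_mul]; norm_num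
  have hf : ∀ᵐ x ∂μ, f x ≤ g x ^ (1 / 2 : ℝ) * h x ^ (1 / 2 : ℝ) := by
    filter_upwards [hfgh] with x hx
    calc f x = (f x ^ 2) ^ (1 / 2 : ℝ) := by
          rw [← ENNReal.rpow_natCast, ← ENNReal.rpow_mul]; norm_num
      _ ≤ (g x * h x) ^ (1 / 2 : ℝ) := by gcongr
      _ = _ := ENNReal.mul_rpow_of_nonneg _ _ (by norm_num)
  calc (∫⁻ x, f x ∂μ) ^ 2
      ≤ ((∫⁻ x, g x ∂μ) ^ (1 / 2 : ℝ) * (∫⁻ x, h x ∂μ) ^ (1 / 2 : ℝ)) ^ 2 := by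
        gcongr
        simpa only [rpow_half_sq] using (lintegral_mono_ae hf).trans
          (lintegral_mul_le_L2_mul_L2 (hg.pow_const _) (hh.pow_const _))
    _ = (∫⁻ x, g x ∂μ) * ∫⁻ x, h x ∂μ := by
        rw [← ENNReal.mul_rpow_of_nonneg _ _ (by norm_num), rpow_half_sq]

theorem lintegral_sq_le_lintegral_inv_mul_mul_lintegral_mul {w f : α → ℝ≥0∞}
    (hw : AEMeasurable w μ) (hf : AEMeasurable f μ) (hw0 : ∀ᵐ x ∂μ, w x ≠ 0)
    (hwtop : ∀ᵐ x ∂μ, w x ≠ ∞) :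
    (∫⁻ x, f x ∂μ) ^ 2 ≤ (∫⁻ x, (w x)⁻¹ * f x ∂μ) * ∫⁻ x, w x * f x ∂μ := by
  refine lintegral_sq_le_of_sq_le_mul (hw.inv.mul hf) (hw.mul hf) ?_
  filter_upwards [hw0, hwtop] with x hx0 hxtop
  rw [mul_mul_mul_comm, ENNReal.inv_mul_cancel hx0 hxtop, one_mul, sq]

theorem lintegral_mul_le_essSup_mul_lintegral {a b : α → ℝ≥0∞} (hb : AEMeasurable b μ) :
    ∫⁻ x, a x * b x ∂μ ≤ essSup a μ * ∫⁻ x, b x ∂μ := by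
  rw [← lintegral_const_mul'' _ hb]
  refine lintegral_mono_ae ?_
  filter_upwards [ENNReal.ae_le_essSup a] with x hx
  gcongr

end

theorem lintegral_sq_lintegral_le_essSup_mul_lintegral {α β : Type*} [MeasurableSpace α]
    [MeasurableSpace β] {ν : Measure α} {μ : Measure β} [SFinite μ] {H : α → β → ℝ≥0∞}
    (hH : Measurable (Function.uncurry H)) {w : β → ℝ≥0∞} (hw : Measurable w)
    (hw0 : ∀ᵐ ξ ∂μ, w ξ ≠ 0) (hwtop : ∀ᵐ ξ ∂μ, w ξ ≠ ∞) :
    ∫⁻ s, (∫⁻ ξ, H s ξ ∂μ) ^ 2 ∂ν ≤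
      essSup (fun s => ∫⁻ ξ, (w ξ)⁻¹ * H s ξ ∂μ) ν * ∫⁻ s, ∫⁻ ξ, w ξ * H s ξ ∂μ ∂ν := by
  have hHs : ∀ s, Measurable (H s) := fun s => hH.comp measurable_prodMk_left
  calc ∫⁻ s, (∫⁻ ξ, H s ξ ∂μ) ^ 2 ∂ν
      ≤ ∫⁻ s, (∫⁻ ξ, (w ξ)⁻¹ * H s ξ ∂μ) * ∫⁻ ξ, w ξ * H s ξ ∂μ ∂ν :=
        lintegral_mono fun s => lintegral_sq_le_lintegral_inv_mul_mul_lintegral_mul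
          hw.aemeasurable (hHs s).aemeasurable hw0 hwtop
    _ ≤ _ := lintegral_mul_le_essSup_mul_lintegral
        ((hw.comp measurable_snd).mul hH).lintegral_prod_right'.aemeasurable

theorem stmt_7_general (T : ℝ)
    (F G : ℝ → EuclideanSpace ℝ (Fin 3) → ENNReal)
    (hF : Measurable (Function.uncurry F)) (hG : Measurable (Function.uncurry G)) :
    (∫⁻ s in Set.Icc (0 : ℝ) T, ∫⁻ ξ, ∫⁻ η, F s η * G s (ξ - η)) ≤
        (∫⁻ s in Set.Icc (0 : ℝ) T, (∫⁻ ξ, F s ξ) ^ 2) ^ (1 / 2 : ℝ) *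
          (∫⁻ s in Set.Icc (0 : ℝ) T, (∫⁻ ξ, G s ξ) ^ 2) ^ (1 / 2 : ℝ) ∧
      (∫⁻ s in Set.Icc (0 : ℝ) T, (∫⁻ ξ, F s ξ) ^ 2) ^ (1 / 2 : ℝ) *
          (∫⁻ s in Set.Icc (0 : ℝ) T, (∫⁻ ξ, G s ξ) ^ 2) ^ (1 / 2 : ℝ) ≤
        (essSup (fun s => ∫⁻ ξ, (ENNReal.ofReal ‖ξ‖)⁻¹ * F s ξ)
            (volume.restrict (Set.Icc (0 : ℝ) T))) ^ (1 / 2 : ℝ) *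
          (∫⁻ s in Set.Icc (0 : ℝ) T, ∫⁻ ξ, ENNReal.ofReal ‖ξ‖ * F s ξ) ^ (1 / 2 : ℝ) *
          (essSup (fun s => ∫⁻ ξ, (ENNReal.ofReal ‖ξ‖)⁻¹ * G s ξ)
            (volume.restrict (Set.Icc (0 : ℝ) T))) ^ (1 / 2 : ℝ) *
          (∫⁻ s in Set.Icc (0 : ℝ) T, ∫⁻ ξ, ENNReal.ofReal ‖ξ‖ * G s ξ) ^ (1 / 2 : ℝ) := by
  have hFs : ∀ s, Measurable (F s) := fun s => hF.comp measurable_prodMk_left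
  have hGs : ∀ s, Measurable (G s) := fun s => hG.comp measurable_prodMk_left
  have hw : Measurable fun ξ : EuclideanSpace ℝ (Fin 3) => ENNReal.ofReal ‖ξ‖ := by fun_prop
  have hw0 : ∀ᵐ ξ : EuclideanSpace ℝ (Fin 3), ENNReal.ofReal ‖ξ‖ ≠ 0 := by
    filter_upwards [volume.ae_ne 0] with ξ hξ
    simpa using hξ
  have hwtop : ∀ᵐ ξ : EuclideanSpace ℝ (Fin 3), ENNReal.ofReal ‖ξ‖ ≠ ∞ :=
    .of_forall fun _ => ENNReal.ofReal_ne_top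
  constructor
  · simp_rw [lintegral_lintegral_mul_sub (hFs _) (hGs _)]
    exact lintegral_mul_le_L2_mul_L2 hF.lintegral_prod_right'.aemeasurable
      hG.lintegral_prod_right'.aemeasurable
  · have hF' := lintegral_sq_lintegral_le_essSup_mul_lintegral
      (ν := volume.restrict (Set.Icc 0 T)) hF hw hw0 hwtop
    have hG' := lintegral_sq_lintegral_le_essSup_mul_lintegral
      (ν := volume.restrict (Set.Icc 0 T)) hG hw hw0 hwtop
    grw [hF', hG', ENNReal.mul_rpow_of_nonneg _ _ (by norm_num : (0 : ℝ) ≤ 1 / 2),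
      ENNReal.mul_rpow_of_nonneg _ _ (by norm_num : (0 : ℝ) ≤ 1 / 2), ← mul_assoc]

/-- Estimate (3.4) for the nonlinearity:
`∫₀ᵀ∫ (F∗G) ≤ ‖F‖_{L²([0,T];χ⁰)} ‖G‖_{L²([0,T];χ⁰)}
  ≤ ‖F‖_{L^∞χ^{−1}}^{1/2} ‖F‖_{L¹χ¹}^{1/2} ‖G‖_{L^∞χ^{−1}}^{1/2} ‖G‖_{L¹χ¹}^{1/2}`. -/
theorem stmt_7 (T : ℝ) (hT : 0 < T)
    (F G : ℝ → EuclideanSpace ℝ (Fin 3) → ENNReal)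
    (hF : Measurable (Function.uncurry F)) (hG : Measurable (Function.uncurry G)) :
    (∫⁻ s in Set.Icc (0 : ℝ) T, ∫⁻ ξ, ∫⁻ η, F s η * G s (ξ - η)) ≤
        (∫⁻ s in Set.Icc (0 : ℝ) T, (∫⁻ ξ, F s ξ) ^ 2) ^ (1 / 2 : ℝ) *
          (∫⁻ s in Set.Icc (0 : ℝ) T, (∫⁻ ξ, G s ξ) ^ 2) ^ (1 / 2 : ℝ) ∧
      (∫⁻ s in Set.Icc (0 : ℝ) T, (∫⁻ ξ, F s ξ) ^ 2) ^ (1 / 2 : ℝ) *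
          (∫⁻ s in Set.Icc (0 : ℝ) T, (∫⁻ ξ, G s ξ) ^ 2) ^ (1 / 2 : ℝ) ≤
        (essSup (fun s => ∫⁻ ξ, (ENNReal.ofReal ‖ξ‖)⁻¹ * F s ξ)
            (volume.restrict (Set.Icc (0 : ℝ) T))) ^ (1 / 2 : ℝ) *
          (∫⁻ s in Set.Icc (0 : ℝ) T, ∫⁻ ξ, ENNReal.ofReal ‖ξ‖ * F s ξ) ^ (1 / 2 : ℝ) *
          (essSup (fun s => ∫⁻ ξ, (ENNReal.ofReal ‖ξ‖)⁻¹ * G s ξ)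
            (volume.restrict (Set.Icc (0 : ℝ) T))) ^ (1 / 2 : ℝ) *
          (∫⁻ s in Set.Icc (0 : ℝ) T, ∫⁻ ξ, ENNReal.ofReal ‖ξ‖ * G s ξ) ^ (1 / 2 : ℝ) :=
  stmt_7_general T F G hF hG
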